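/- Let d, d1, d2 be integers with 2 ≤ d1 < d/2 and d2 = d - 1 - d1, and let f(x,y,z) = x^d + x^{d1} y^{d2+1} + y^{d-1} z in ℂ[x,y,z]. Then y^{d1}·f_y − ((d2+1)·x^{d1} + (d−1)·y^{d1−1}·z)·f_z = 0, where f_y, f_z denote the partial derivatives of f. -/

import Mathlib

open MvPolynomial

namespace MvPolynomial

/-- The polynomial `f` with `d₁ = m + 1`, `d₂ = n`, `d = m + n + 2`, parametrized so that no
natural-number subtraction occurs. -/
noncomputable def trinomialCurve (R : Type*) [CommRing R] (m n : ℕ) : MvPolynomial (Fin 3) R :=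
  X 0 ^ (m + n + 2) + X 0 ^ (m + 1) * X 1 ^ (n + 1) + X 1 ^ (m + n + 1) * X 2

variable {R : Type*} [CommRing R]

theorem pderiv_one_trinomialCurve (m n : ℕ) :
    pderiv 1 (trinomialCurve R m n) =
      C ((n : R) + 1) * X 0 ^ (m + 1) * X 1 ^ n + C ((m + n + 1 : ℕ) : R) * X 1 ^ (m + n) * X 2 := by
  simp only [trinomialCurve, map_add, Derivation.leibniz, Derivation.leibniz_pow, pderiv_X,
    Pi.single_apply]
  norm_num [Fin.ext_iff, ← C_eq_smul_one, smul_eq_C_mul]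
  ring

theorem pderiv_two_trinomialCurve (m n : ℕ) :
    pderiv 2 (trinomialCurve R m n) = X 1 ^ (m + n + 1) := by
  simp only [trinomialCurve, map_add, Derivation.leibniz, Derivation.leibniz_pow, pderiv_X,
    Pi.single_apply]
  norm_num [Fin.ext_iff]

theorem trinomialCurve_syzygy (m n : ℕ) :
    X 1 ^ (m + 1) * pderiv 1 (trinomialCurve R m n)
      - (C ((n : R) + 1) * X 0 ^ (m + 1) + C ((m + n + 1 : ℕ) : R) * X 1 ^ m * X 2)
        * pderiv 2 (trinomialCurve R m n) = 0 := by
  rw [pderiv_one_trinomialCurve, pderiv_two_trinomialCurve]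
  ring

end MvPolynomial

theorem stmt_0 (d d1 d2 : ℕ) (h1 : 2 ≤ d1) (h2 : 2 * d1 < d) (h3 : d2 = d - 1 - d1)
    (f : MvPolynomial (Fin 3) ℂ)
    (hf : f = X 0 ^ d + X 0 ^ d1 * X 1 ^ (d2 + 1) + X 1 ^ (d - 1) * X 2) :
    X 1 ^ d1 * pderiv 1 f
      - (C ((d2 : ℂ) + 1) * X 0 ^ d1 + C ((d : ℂ) - 1) * X 1 ^ (d1 - 1) * X 2) * pderiv 2 f
      = 0 := by
  obtain ⟨m, rfl⟩ : ∃ m, d1 = m + 1 := ⟨d1 - 1, by omega⟩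
  obtain rfl : d = m + d2 + 2 := by omega
  have hf' : f = trinomialCurve ℂ m d2 := hf
  have hcast : ((m + d2 + 2 : ℕ) : ℂ) - 1 = ((m + d2 + 1 : ℕ) : ℂ) := by push_cast; ring
  rw [hf', hcast, Nat.add_sub_cancel]
  exact trinomialCurve_syzygy m d2
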